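/- In dimension 1, under Hypotheses 1–3: let u = T⁻[v] with v 1-periodic semiconcave. If v is non-differentiable at x, then u is non-differentiable at Σ₊[u](x). In particular, if u is a discrete weak K.A.M. solution (T⁻[u] = u + S̄), then the set Sing(u) of non-differentiability points of u is forward invariant under Σ₊[u]. -/

import Mathlib

open Filter Topology

/-- The discrete backward Lax-Oleinik operator (dimension 1). -/
noncomputable def Tminus (S : ℝ → ℝ → ℝ) (u : ℝ → ℝ) : ℝ → ℝ :=
  fun y => ⨅ x, (u x + S x y)

/-- The discrete forward Lax-Oleinik operator (dimension 1). -/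
noncomputable def Tplus (S : ℝ → ℝ → ℝ) (u : ℝ → ℝ) : ℝ → ℝ :=
  fun x => ⨆ y, (u y - S x y)

/-- 1-periodicity. -/
def Periodic1 (u : ℝ → ℝ) : Prop := ∀ x, u (x + 1) = u x

/-- Coercivity: S(x,y) → +∞ as |x−y| → ∞. -/
def Coercive1 (S : ℝ → ℝ → ℝ) : Prop :=
  ∀ M : ℝ, ∃ R : ℝ, ∀ x y : ℝ, R ≤ |x - y| → M ≤ S x y

/-- Diagonal periodicity: S(x+m, y+m) = S(x,y) for m ∈ ℤ. -/
def DiagPeriodic1 (S : ℝ → ℝ → ℝ) : Prop :=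
  ∀ (m : ℤ) (x y : ℝ), S (x + m) (y + m) = S x y

/-- Semiconcavity with a linear modulus (dimension 1). -/
def Semiconcave1 (v : ℝ → ℝ) : Prop :=
  ∃ C : ℝ, 0 ≤ C ∧ ∀ x y θ : ℝ, θ ∈ Set.Icc (0:ℝ) 1 →
    θ * v x + (1 - θ) * v y - v (θ * x + (1 - θ) * y) ≤
      C / 2 * θ * (1 - θ) * |x - y| ^ 2

/-- Local semiconcavity (with linear modulus) on a normed space. -/
def LocallySemiconcave {E : Type*} [NormedAddCommGroup E] [NormedSpace ℝ E]
    (f : E → ℝ) : Prop :=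
  ∀ x : E, ∃ U ∈ 𝓝 x, Convex ℝ U ∧ ∃ C : ℝ, 0 ≤ C ∧
    ∀ y ∈ U, ∀ z ∈ U, ∀ θ : ℝ, θ ∈ Set.Icc (0:ℝ) 1 →
      θ * f y + (1 - θ) * f z - f (θ • y + (1 - θ) • z) ≤
        C / 2 * θ * (1 - θ) * ‖y - z‖ ^ 2

/-- The ferromagnetic property in dimension 1: S is C¹ and the maps
`y ↦ ∂₁S(x,y)` and `x ↦ ∂₂S(x,y)` are homeomorphisms of ℝ. -/
def Ferromagnetic1 (S : ℝ → ℝ → ℝ) : Prop :=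
  ContDiff ℝ 1 (fun p : ℝ × ℝ => S p.1 p.2) ∧
  (∀ x : ℝ, ∃ h : ℝ ≃ₜ ℝ, ∀ y, h y = deriv (fun t => S t y) x) ∧
  (∀ y : ℝ, ∃ h : ℝ ≃ₜ ℝ, ∀ x, h x = deriv (fun t => S x t) y)

/-- The Aubry–Le Daeron non-crossing condition. -/
def NonCrossing (S : ℝ → ℝ → ℝ) : Prop :=
  ∀ x₁ x₂ y₁ y₂ : ℝ, (x₁ - x₂) * (y₁ - y₂) < 0 →
    S x₁ y₂ + S x₂ y₁ < S x₁ y₁ + S x₂ y₂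

/-- σ is the (single-valued) optimal forward map of u. -/
def FwdMap (S : ℝ → ℝ → ℝ) (u σ : ℝ → ℝ) : Prop :=
  (∀ x z, u z - S x z ≤ u (σ x) - S x (σ x)) ∧
  (∀ x y, (∀ z, u z - S x z ≤ u y - S x y) → y = σ x)

/-!
If `u = T⁻[v]` were differentiable at `y = Σ₊[u](x)`, pick `x'` with `u y = v x' + S(x', y)`.
Since `u ≤ v x' + S(x', ·)` with equality at `y`, the point `y` maximizes both `u - S(x, ·)` and
`u - S(x', ·)`, so Fermat's rule gives `∂₂S(x, y) = u'(y) = ∂₂S(x', y)` and the ferromagnetic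
hypothesis forces `x' = x`. But `v` is semiconcave and touched from below at `x'` by the
differentiable function `v x' + S(x', y) - S(·, y)`, so `v` is differentiable at `x' = x`.
A weak K.A.M. solution `u` is itself semiconcave: at each point it is touched from above by a
translate of some `S(x₀, ·)`.
-/

open Asymptotics Function Set

/-- The pointwise consequence of semiconcavity that the argument uses, for `v`, `u` and `S`
alike. -/
def MidpointSemiconcaveAt {E : Type*} [NormedAddCommGroup E] (f : E → ℝ) (x : E) : Prop :=
  ∃ C : ℝ, ∀ᶠ h in 𝓝 (0 : E), f (x + h) + f (x - h) - 2 * f x ≤ C * ‖h‖ ^ 2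

section NormedAddCommGroup

variable {E : Type*} [NormedAddCommGroup E]

theorem MidpointSemiconcaveAt.comp_prodMk_left {F : Type*} [NormedAddCommGroup F]
    {f : E × F → ℝ} {a : E} {p : F} (hf : MidpointSemiconcaveAt f (a, p)) :
    MidpointSemiconcaveAt (fun y => f (a, y)) p := by
  obtain ⟨C, hC⟩ := hf
  refine ⟨C, ?_⟩
  have hinr : Tendsto (fun h : F => ((0 : E), h)) (𝓝 0) (𝓝 ((0 : E), (0 : F))) :=
    (continuous_const.prodMk continuous_id).tendsto 0
  filter_upwards [hinr.eventually hC] with h hh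
  simpa [Prod.norm_def] using hh

theorem MidpointSemiconcaveAt.of_forall_sub_le_sub {u φ : E → ℝ} {x : E}
    (hφ : MidpointSemiconcaveAt φ x) (hle : ∀ y, u y - u x ≤ φ y - φ x) :
    MidpointSemiconcaveAt u x := by
  obtain ⟨C, hC⟩ := hφ
  refine ⟨C, hC.mono fun h hh => ?_⟩
  linarith [hle (x + h), hle (x - h)]

end NormedAddCommGroup

section NormedSpace

variable {E : Type*} [NormedAddCommGroup E] [NormedSpace ℝ E]

theorem HasFDerivAt.isLittleO_symmetricDiff {F : E → ℝ} {F' : E →L[ℝ] ℝ} {x : E}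
    (hF : HasFDerivAt F F' x) :
    (fun h => F (x + h) + F (x - h) - 2 * F x) =o[𝓝 0] fun h => h := by
  have hplus := hasFDerivAt_iff_isLittleO_nhds_zero.1 hF
  have hminus : (fun h => F (x - h) - F x + F' h) =o[𝓝 0] fun h => h := by
    have := hplus.comp_tendsto (continuous_neg.tendsto' (0 : E) 0 neg_zero)
    refine (isLittleO_neg_right.1 this).congr_left fun h => ?_
    simp [sub_eq_add_neg]
  exact (hplus.add hminus).congr_left fun h => by ring

theorem MidpointSemiconcaveAt.hasFDerivAt_of_isLocalMin_add {v F : E → ℝ}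
    {F' : E →L[ℝ] ℝ} {x : E} (hv : MidpointSemiconcaveAt v x) (hF : HasFDerivAt F F' x)
    (hmin : IsLocalMin (fun t => v t + F t) x) : HasFDerivAt v (-F') x := by
  obtain ⟨C, hC⟩ := hv
  set w : E → ℝ := fun h => v (x + h) + F (x + h) - (v x + F x)
  have hw_nonneg : ∀ᶠ h in 𝓝 0, 0 ≤ w h :=
    (((continuous_const_add x).tendsto' 0 x (add_zero x)).eventually hmin).mono
      fun h hh => sub_nonneg.2 hh
  have hw_neg_nonneg : ∀ᶠ h in 𝓝 (0 : E), 0 ≤ w (-h) :=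
    (continuous_neg.tendsto' (0 : E) 0 neg_zero).eventually hw_nonneg
  have hbound : (fun h => C * ‖h‖ ^ 2 + (F (x + h) + F (x - h) - 2 * F x)) =o[𝓝 0]
      fun h => h :=
    ((isLittleO_norm_pow_id one_lt_two).const_mul_left C).add hF.isLittleO_symmetricDiff
  -- `w ≥ 0` near `0`, while `w h + w (-h)` is `o(h)` by semiconcavity of `v` and
  -- differentiability of `F`.
  have hw : w =o[𝓝 0] fun h => h := by
    refine (IsBigO.of_bound 1 ?_).trans_isLittleO hbound
    filter_upwards [hC, hw_nonneg, hw_neg_nonneg] with h hCh h₁ h₂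
    rw [one_mul, Real.norm_of_nonneg h₁]
    refine le_trans ?_ (le_abs_self _)
    simp only [w, ← sub_eq_add_neg] at h₁ h₂ ⊢
    linarith
  rw [hasFDerivAt_iff_isLittleO_nhds_zero]
  refine (hw.sub (hasFDerivAt_iff_isLittleO_nhds_zero.1 hF)).congr_left fun h => ?_
  simp only [w, neg_apply]
  ring

theorem LocallySemiconcave.midpointSemiconcaveAt {f : E → ℝ} (hf : LocallySemiconcave f)
    (x : E) : MidpointSemiconcaveAt f x := by
  obtain ⟨U, hU, -, C, -, hC⟩ := hf x
  refine ⟨C, ?_⟩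
  have hplus : ∀ᶠ h in 𝓝 (0 : E), x + h ∈ U :=
    ((continuous_const_add x).tendsto' 0 x (add_zero x)).eventually hU
  have hminus : ∀ᶠ h in 𝓝 (0 : E), x - h ∈ U :=
    ((continuous_sub_left x).tendsto' 0 x (sub_zero x)).eventually hU
  filter_upwards [hplus, hminus] with h h₁ h₂
  have key := hC _ h₁ _ h₂ (1 / 2) ⟨by norm_num, by norm_num⟩
  have hmid : (1 / 2 : ℝ) • (x + h) + (1 - 1 / 2 : ℝ) • (x - h) = x := by module
  have hdiff : ‖x + h - (x - h)‖ = 2 * ‖h‖ := by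
    rw [add_sub_sub_cancel, ← two_smul ℝ h, norm_smul, Real.norm_two]
  rw [hmid, hdiff] at key
  nlinarith [key]

end NormedSpace

theorem Semiconcave1.midpointSemiconcaveAt {v : ℝ → ℝ} (hv : Semiconcave1 v) (x : ℝ) :
    MidpointSemiconcaveAt v x := by
  obtain ⟨C, -, hC⟩ := hv
  refine ⟨C, Eventually.of_forall fun h => ?_⟩
  have key := hC (x + h) (x - h) (1 / 2) ⟨by norm_num, by norm_num⟩
  have hmid : 1 / 2 * (x + h) + (1 - 1 / 2) * (x - h) = x := by ring
  rw [hmid, add_sub_sub_cancel, ← two_mul, abs_mul, abs_two] at key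
  rw [Real.norm_eq_abs]
  nlinarith [key]

/-- `v` is the sum of the concave function `v - C t² / 2` and a smooth function. -/
theorem Semiconcave1.continuous {v : ℝ → ℝ} (hv : Semiconcave1 v) : Continuous v := by
  obtain ⟨C, -, hC⟩ := hv
  have hconc : ConcaveOn ℝ univ fun t => v t - C / 2 * t ^ 2 := by
    refine ⟨convex_univ, fun p _ q _ a b ha hb hab => ?_⟩
    obtain rfl : b = 1 - a := by linarith
    have key := hC p q a ⟨ha, by linarith⟩
    rw [sq_abs] at key
    simp only [smul_eq_mul]
    nlinarith [key]
  have hcont : Continuous fun t => v t - C / 2 * t ^ 2 :=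
    continuousOn_univ.1 (hconc.continuousOn isOpen_univ)
  exact (hcont.add (by fun_prop : Continuous fun t : ℝ => C / 2 * t ^ 2)).congr
    fun t => sub_add_cancel _ _

theorem Ferromagnetic1.injective_deriv_right {S : ℝ → ℝ → ℝ} (hS : Ferromagnetic1 S) (y : ℝ) :
    Injective fun x => deriv (fun t => S x t) y := by
  obtain ⟨h, hh⟩ := hS.2.2 y
  intro a b hab
  exact h.injective (by rw [hh, hh]; exact hab)

theorem Coercive1.tendsto_cocompact {S : ℝ → ℝ → ℝ} (hS : Coercive1 S) (z : ℝ) :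
    Tendsto (fun t => S t z) (cocompact ℝ) atTop := by
  refine tendsto_atTop.2 fun M => ?_
  obtain ⟨R, hR⟩ := hS M
  filter_upwards [(tendsto_dist_right_cocompact_atTop z).eventually (eventually_ge_atTop R)]
    with t ht
  exact hR t z (by rwa [← Real.dist_eq])

theorem Coercive1.exists_forall_add_le {S : ℝ → ℝ → ℝ} {v : ℝ → ℝ} {z : ℝ} (hS : Coercive1 S)
    (hSz : Continuous fun t => S t z) (hv : Continuous v) (hvb : BddBelow (range v)) :
    ∃ t, ∀ s, v t + S t z ≤ v s + S s z := by
  obtain ⟨m, hm⟩ := hvb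
  exact (hv.add hSz).exists_forall_le
    (tendsto_atTop_add_left_of_le _ m (fun t => hm (mem_range_self t)) (hS.tendsto_cocompact z))

section Tminus

variable {S : ℝ → ℝ → ℝ} {v : ℝ → ℝ} {z t : ℝ}

theorem Tminus_le_of_forall_le (ht : ∀ s, v t + S t z ≤ v s + S s z) (s : ℝ) :
    Tminus S v z ≤ v s + S s z :=
  ciInf_le ⟨_, forall_mem_range.2 ht⟩ s

theorem Tminus_eq_of_forall_le (ht : ∀ s, v t + S t z ≤ v s + S s z) :
    Tminus S v z = v t + S t z :=
  le_antisymm (Tminus_le_of_forall_le ht t) (le_ciInf ht)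

theorem midpointSemiconcaveAt_of_Tminus_eq_add {c : ℝ}
    (hS : LocallySemiconcave fun p : ℝ × ℝ => S p.1 p.2)
    (hmin : ∀ y, ∃ t, ∀ s, v t + S t y ≤ v s + S s y) (hv : ∀ y, Tminus S v y = v y + c) :
    ∀ z, MidpointSemiconcaveAt v z := by
  intro z
  obtain ⟨t, ht⟩ := hmin z
  have hz := Tminus_eq_of_forall_le ht
  refine ((hS.midpointSemiconcaveAt (t, z)).comp_prodMk_left).of_forall_sub_le_sub fun y => ?_
  have hy := Tminus_le_of_forall_le (hmin y).choose_spec t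
  rw [hv] at hz hy
  dsimp only
  linarith

theorem differentiableAt_of_differentiableAt_Tminus {x y : ℝ}
    (hS : Differentiable ℝ fun p : ℝ × ℝ => S p.1 p.2)
    (hinj : Injective fun x => deriv (fun t => S x t) y)
    (hsc : ∀ p, MidpointSemiconcaveAt v p)
    (hmin : ∀ z, ∃ t, ∀ s, v t + S t z ≤ v s + S s z)
    (hmax : ∀ z, Tminus S v z - S x z ≤ Tminus S v y - S x y)
    (hd : DifferentiableAt ℝ (Tminus S v) y) : DifferentiableAt ℝ v x := by
  have hright : ∀ a, Differentiable ℝ fun t => S a t := fun a =>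
    hS.comp ((differentiable_const a).prodMk differentiable_id)
  have hleft : Differentiable ℝ fun t => S t y :=
    hS.comp (differentiable_id.prodMk (differentiable_const y))
  have hfermat : ∀ a, (∀ z, Tminus S v z - S a z ≤ Tminus S v y - S a y) →
      deriv (Tminus S v) y = deriv (fun t => S a t) y := fun a ha =>
    sub_eq_zero.1 <| (IsLocalMax.hasDerivAt_eq_zero (Eventually.of_forall ha)
      (hd.hasDerivAt.sub (hright a y).hasDerivAt))
  obtain ⟨x', hx'⟩ := hmin y
  have hmax' : ∀ z, Tminus S v z - S x' z ≤ Tminus S v y - S x' y := fun z => by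
    linarith [Tminus_le_of_forall_le (hmin z).choose_spec x', Tminus_eq_of_forall_le hx']
  obtain rfl : x' = x := hinj ((hfermat x' hmax').symm.trans (hfermat x hmax))
  exact ((hsc x').hasFDerivAt_of_isLocalMin_add (hleft x').hasFDerivAt
    (Eventually.of_forall hx')).differentiableAt

end Tminus

theorem singularities_propagate_general (S : ℝ → ℝ → ℝ)
    (hco : Coercive1 S)
    (hlsc : LocallySemiconcave fun p : ℝ × ℝ => S p.1 p.2)
    (hfer : Ferromagnetic1 S) :
    (∀ v u σ : ℝ → ℝ, Periodic1 v → Semiconcave1 v → u = Tminus S v →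
      FwdMap S u σ → ∀ x, ¬ DifferentiableAt ℝ v x → ¬ DifferentiableAt ℝ u (σ x)) ∧
    (∀ (u σ : ℝ → ℝ) (Sbar : ℝ), Continuous u → Periodic1 u →
      (∀ y, Tminus S u y = u y + Sbar) → FwdMap S u σ →
      ∀ x, ¬ DifferentiableAt ℝ u x → ¬ DifferentiableAt ℝ u (σ x)) := by
  have hS : Differentiable ℝ fun p : ℝ × ℝ => S p.1 p.2 := hfer.1.differentiable one_ne_zero
  have hmin : ∀ v : ℝ → ℝ, Continuous v → Periodic1 v →
      ∀ z, ∃ t, ∀ s, v t + S t z ≤ v s + S s z := fun v hv hper z =>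
    hco.exists_forall_add_le (hS.continuous.comp (continuous_id.prodMk continuous_const)) hv
      (Periodic.isBounded_of_continuous hper one_ne_zero hv).bddBelow
  refine ⟨?_, ?_⟩
  · rintro v u σ hper hsc rfl hσ x hvx hu
    exact hvx <| differentiableAt_of_differentiableAt_Tminus hS (hfer.injective_deriv_right _)
      hsc.midpointSemiconcaveAt (hmin v hsc.continuous hper) (hσ.1 x) hu
  · intro u σ Sbar hu hper hkam hσ x hux hu'
    have humin := hmin u hu hper
    have hT : Tminus S u = fun y => u y + Sbar := funext hkam
    refine hux <| differentiableAt_of_differentiableAt_Tminus hS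
      (hfer.injective_deriv_right (σ x)) (midpointSemiconcaveAt_of_Tminus_eq_add hlsc humin hkam)
      humin (fun z => ?_) ?_
    · simp only [hT]
      linarith [hσ.1 x z]
    · rw [hT]
      exact hu'.add_const Sbar

/-- The optimal forward map propagates singularities: if v is non-differentiable
at x then u = T⁻[v] is non-differentiable at Σ₊[u](x).  In particular, for a
discrete weak K.A.M. solution u (T⁻[u] = u + S̄), the singular set of u is
forward invariant under Σ₊[u]. -/
theorem singularities_propagate (S : ℝ → ℝ → ℝ)
    (hS : Continuous fun p : ℝ × ℝ => S p.1 p.2)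
    (hco : Coercive1 S) (hdp : DiagPeriodic1 S)
    (hlsc : LocallySemiconcave fun p : ℝ × ℝ => S p.1 p.2)
    (hfer : Ferromagnetic1 S) (hnc : NonCrossing S) :
    (∀ v u σ : ℝ → ℝ, Periodic1 v → Semiconcave1 v → u = Tminus S v →
      FwdMap S u σ → ∀ x, ¬ DifferentiableAt ℝ v x → ¬ DifferentiableAt ℝ u (σ x)) ∧
    (∀ (u σ : ℝ → ℝ) (Sbar : ℝ), Continuous u → Periodic1 u →
      (∀ y, Tminus S u y = u y + Sbar) → FwdMap S u σ →
      ∀ x, ¬ DifferentiableAt ℝ u x → ¬ DifferentiableAt ℝ u (σ x)) :=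
  singularities_propagate_general S hco hlsc hfer
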